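/- (Rayleigh–Taylor quantity formulas.) For the two-phase Muskat problem, define $\mathrm{RT}(x,t) = (\nabla_{x,y}p^+ - \nabla_{x,y}p^-)\cdot n|_{\Sigma_t}$. Then (i) $\mathrm{RT} = (1+|\nabla\eta|^2)^{1/2}\big(\llbracket\rho\rrbracket - \llbracket B\rrbracket\big)$, where $\llbracket\rho\rrbracket = \rho^- - \rho^+$, $\llbracket B\rrbracket = B^- - B^+$, and $B^\pm = \frac{\nabla\eta\cdot\nabla f^\pm + G^\pm(\eta)f^\pm}{1+|\nabla\eta|^2}$ with $f^\pm = p^\pm|_\Sigma + \rho^\pm\eta$; and (ii) using Darcy's law, $\mathrm{RT} = \llbracket\rho\rrbracket(1+|\nabla\eta|^2)^{-1/2} + \llbracket\mu\rrbracket\, u\cdot n$ with $\llbracket\mu\rrbracket = \mu^- - \mu^+$. -/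

import Mathlib

open MeasureTheory
open scoped ENNReal

noncomputable section

/-- The point `(x, t) ∈ ℝ^{d+1} = ℝ^d × ℝ`. -/
def liftPt {d : ℕ} (x : EuclideanSpace ℝ (Fin d)) (t : ℝ) :
    EuclideanSpace ℝ (Fin (d + 1)) :=
  (WithLp.equiv 2 (Fin (d + 1) → ℝ)).symm (Fin.snoc (fun i => x i) t)

/-- The vertical coordinate `y` of a point `p ∈ ℝ^{d+1}`. -/
def ycoord {d : ℕ} (p : EuclideanSpace ℝ (Fin (d + 1))) : ℝ := p (Fin.last d)

/-- The (non-normalized) upward normal `(-∇η(x), 1)` to the graph of `η`. -/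
def nvec {d : ℕ} (η : EuclideanSpace ℝ (Fin d) → ℝ) (x : EuclideanSpace ℝ (Fin d)) :
    EuclideanSpace ℝ (Fin (d + 1)) :=
  liftPt (-(gradient η x)) 1

/-- The trace on `Σ = {y = η(x)}` of a function `q` on `ℝ^{d+1}`. -/
def surfTrace {d : ℕ} (η : EuclideanSpace ℝ (Fin d) → ℝ)
    (q : EuclideanSpace ℝ (Fin (d + 1)) → ℝ) (x : EuclideanSpace ℝ (Fin d)) : ℝ :=
  q (liftPt x (η x))

/-- `√(1+|∇η|²) ∂q/∂n |_Σ = (∂_y q - ∇η·∇_x q)(x, η(x))`, the conormal derivative. -/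
def conormAt {d : ℕ} (η : EuclideanSpace ℝ (Fin d) → ℝ)
    (q : EuclideanSpace ℝ (Fin (d + 1)) → ℝ) (x : EuclideanSpace ℝ (Fin d)) : ℝ :=
  (inner ℝ (gradient q (liftPt x (η x))) (nvec η x) : ℝ)

/-- `B = (∇η·∇f + G(η)f)/(1+|∇η|²)` computed from the harmonic extension `q` of
`f = q|_Σ`; algebraically this equals `∂_y q|_Σ`. -/
def Bcoef {d : ℕ} (η : EuclideanSpace ℝ (Fin d) → ℝ)
    (q : EuclideanSpace ℝ (Fin (d + 1)) → ℝ) (x : EuclideanSpace ℝ (Fin d)) : ℝ :=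
  ((inner ℝ (gradient η x) (gradient (surfTrace η q) x) : ℝ) + conormAt η q x) /
    (1 + ‖gradient η x‖ ^ 2)

/-- The Rayleigh–Taylor quantity `RT = (∇p⁺ - ∇p⁻)·n |_Σ`. -/
def RTq {d : ℕ} (η : EuclideanSpace ℝ (Fin d) → ℝ)
    (pPlus pMinus : EuclideanSpace ℝ (Fin (d + 1)) → ℝ)
    (x : EuclideanSpace ℝ (Fin d)) : ℝ :=
  (Real.sqrt (1 + ‖gradient η x‖ ^ 2))⁻¹ *
    (inner ℝ (gradient pPlus (liftPt x (η x)) - gradient pMinus (liftPt x (η x)))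
      (nvec η x) : ℝ)

/-! Replacing `p^±` by `p^± + ρ^± y` shifts `B` by exactly `ρ^±`. Since the pressure is
continuous on `Σ`, the tangential parts of `B(p⁺)` and `B(p⁻)` cancel, so their difference is
the jump of the conormal derivatives `∇p^± · (-∇η, 1)` over `1+|∇η|²`, and that jump is
`√(1+|∇η|²) RT`; this gives (i). For (ii), Darcy's law expresses the conormal derivative of
`p^±` through `ρ^±` and `u^± · n`, and `u · n` is continuous. -/

lemma liftPt_last {d : ℕ} (x : EuclideanSpace ℝ (Fin d)) (t : ℝ) :
    liftPt x t (Fin.last d) = t := by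
  simp [liftPt]

lemma inner_liftPt_zero_one {d : ℕ} (v : EuclideanSpace ℝ (Fin (d + 1))) :
    inner ℝ (liftPt (0 : EuclideanSpace ℝ (Fin d)) 1) v = v (Fin.last d) := by
  simp [liftPt, PiLp.inner_apply, Fin.sum_univ_castSucc]

lemma inner_liftPt_zero_one_nvec {d : ℕ} (η : EuclideanSpace ℝ (Fin d) → ℝ)
    (x : EuclideanSpace ℝ (Fin d)) :
    inner ℝ (liftPt (0 : EuclideanSpace ℝ (Fin d)) 1) (nvec η x) = 1 := by
  rw [inner_liftPt_zero_one, nvec, liftPt_last]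

lemma ycoord_eq_innerSL {d : ℕ} :
    (ycoord : EuclideanSpace ℝ (Fin (d + 1)) → ℝ) =
      innerSL ℝ (liftPt (0 : EuclideanSpace ℝ (Fin d)) 1) :=
  funext fun p => (inner_liftPt_zero_one p).symm

lemma differentiable_ycoord {d : ℕ} :
    Differentiable ℝ (ycoord : EuclideanSpace ℝ (Fin (d + 1)) → ℝ) := by
  rw [ycoord_eq_innerSL]
  exact (innerSL ℝ _).differentiable

lemma gradient_ycoord {d : ℕ} (z : EuclideanSpace ℝ (Fin (d + 1))) :
    gradient ycoord z = liftPt (0 : EuclideanSpace ℝ (Fin d)) 1 := by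
  refine HasGradientAt.gradient ?_
  rw [ycoord_eq_innerSL, hasGradientAt_iff_hasFDerivAt]
  exact (innerSL ℝ (liftPt (0 : EuclideanSpace ℝ (Fin d)) 1)).hasFDerivAt

section Gradient

variable {F : Type*} [NormedAddCommGroup F] [InnerProductSpace ℝ F] [CompleteSpace F]
  {f g : F → ℝ} {z : F}

lemma gradient_fun_add (hf : DifferentiableAt ℝ f z) (hg : DifferentiableAt ℝ g z) :
    gradient (fun y => f y + g y) z = gradient f z + gradient g z := by
  simp only [gradient, fderiv_fun_add hf hg, map_add]

lemma gradient_fun_const_mul (hf : DifferentiableAt ℝ f z) (c : ℝ) :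
    gradient (fun y => c * f y) z = c • gradient f z := by
  simp only [gradient, fderiv_const_mul hf, map_smulₛₗ, RCLike.conj_to_real]

end Gradient

section Graph

variable {d : ℕ} {η : EuclideanSpace ℝ (Fin d) → ℝ} {x : EuclideanSpace ℝ (Fin d)}

lemma differentiableAt_liftPt_graph (hη : DifferentiableAt ℝ η x) :
    DifferentiableAt ℝ (fun x => liftPt x (η x)) x := by
  have h : (fun x => liftPt x (η x)) = fun x => ∑ i : Fin d, x i • EuclideanSpace.single
      i.castSucc 1 + η x • EuclideanSpace.single (Fin.last d) 1 := by
    funext y; ext j; induction j using Fin.lastCases <;> simp [liftPt, Pi.single_apply]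
  rw [h]
  fun_prop

lemma surfTrace_add_mul_ycoord (q : EuclideanSpace ℝ (Fin (d + 1)) → ℝ) (ρ : ℝ) :
    surfTrace η (fun p => q p + ρ * ycoord p) = fun x => surfTrace η q x + ρ * η x := by
  funext x
  simp only [surfTrace, ycoord, liftPt_last]

lemma conormAt_add_mul_ycoord {q : EuclideanSpace ℝ (Fin (d + 1)) → ℝ}
    (hq : DifferentiableAt ℝ q (liftPt x (η x))) (ρ : ℝ) :
    conormAt η (fun p => q p + ρ * ycoord p) x = conormAt η q x + ρ := by
  have hg := gradient_fun_add hq (differentiable_ycoord.differentiableAt.const_mul ρ)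
  simp only [conormAt, hg, gradient_fun_const_mul differentiable_ycoord.differentiableAt,
    gradient_ycoord, inner_add_left, real_inner_smul_left,
    inner_liftPt_zero_one_nvec, mul_one]

lemma Bcoef_add_mul_ycoord {q : EuclideanSpace ℝ (Fin (d + 1)) → ℝ}
    (hη : DifferentiableAt ℝ η x) (hq : DifferentiableAt ℝ q (liftPt x (η x))) (ρ : ℝ) :
    Bcoef η (fun p => q p + ρ * ycoord p) x = Bcoef η q x + ρ := by
  have hf : DifferentiableAt ℝ (surfTrace η q) x := hq.comp x (differentiableAt_liftPt_graph hη)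
  have hg := gradient_fun_add hf (hη.const_mul ρ)
  simp only [Bcoef, surfTrace_add_mul_ycoord, conormAt_add_mul_ycoord hq, hg,
    gradient_fun_const_mul hη, inner_add_right, real_inner_smul_right, real_inner_self_eq_norm_sq]
  field_simp
  ring

lemma Bcoef_sub_of_surfTrace_eq {q₁ q₂ : EuclideanSpace ℝ (Fin (d + 1)) → ℝ}
    (h : surfTrace η q₁ = surfTrace η q₂) :
    Bcoef η q₁ x - Bcoef η q₂ x =
      (conormAt η q₁ x - conormAt η q₂ x) / (1 + ‖gradient η x‖ ^ 2) := by
  rw [Bcoef, Bcoef, h, ← sub_div]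
  ring

lemma RTq_eq_conormAt_sub (pPlus pMinus : EuclideanSpace ℝ (Fin (d + 1)) → ℝ) :
    RTq η pPlus pMinus x =
      (Real.sqrt (1 + ‖gradient η x‖ ^ 2))⁻¹ * (conormAt η pPlus x - conormAt η pMinus x) := by
  rw [RTq, inner_sub_left, conormAt, conormAt]

lemma conormAt_eq_of_darcy {p : EuclideanSpace ℝ (Fin (d + 1)) → ℝ}
    {u : EuclideanSpace ℝ (Fin (d + 1))} {ρ μ : ℝ}
    (h : μ • u + gradient p (liftPt x (η x)) = -(ρ • liftPt (0 : EuclideanSpace ℝ (Fin d)) 1)) :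
    conormAt η p x = -ρ - μ * inner ℝ u (nvec η x) := by
  rw [conormAt, eq_sub_of_add_eq' h]
  simp only [inner_sub_left, inner_neg_left, real_inner_smul_left, inner_liftPt_zero_one_nvec]
  ring

end Graph

/-- Rayleigh–Taylor quantity formulas: with pressures `p^±`
continuous across the interface and satisfying Darcy's law, and with
`f^± = p^±|_Σ + ρ^± η`, `B^± = (∇η·∇f^± + G^±(η)f^±)/(1+|∇η|²)` (computed via the
extensions `q^± = p^± + ρ^± y`), one has
(i) `RT = √(1+|∇η|²)(⟦ρ⟧ - ⟦B⟧)` and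
(ii) `RT = ⟦ρ⟧(1+|∇η|²)^{-1/2} + ⟦μ⟧ u·n`. -/
theorem stmt_11 (d : ℕ) (ρPlus ρMinus μPlus μMinus : ℝ)
    (η : EuclideanSpace ℝ (Fin d) → ℝ) (hη : Differentiable ℝ η)
    (pPlus pMinus : EuclideanSpace ℝ (Fin (d + 1)) → ℝ)
    (hpP : Differentiable ℝ pPlus) (hpM : Differentiable ℝ pMinus)
    (uPlus uMinus : EuclideanSpace ℝ (Fin (d + 1)) → EuclideanSpace ℝ (Fin (d + 1)))
    -- continuity of the pressure across `Σ`
    (hcontp : ∀ x, pPlus (liftPt x (η x)) = pMinus (liftPt x (η x)))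
    -- Darcy's law `μ^± u^± + ∇p^± = -(0, ρ^±)` on `Σ`
    (hDarcyP : ∀ x, μPlus • uPlus (liftPt x (η x)) + gradient pPlus (liftPt x (η x))
        = -(ρPlus • liftPt (0 : EuclideanSpace ℝ (Fin d)) 1))
    (hDarcyM : ∀ x, μMinus • uMinus (liftPt x (η x)) + gradient pMinus (liftPt x (η x))
        = -(ρMinus • liftPt (0 : EuclideanSpace ℝ (Fin d)) 1))
    -- continuity of the normal velocity across `Σ`
    (hun : ∀ x, (inner ℝ (uPlus (liftPt x (η x))) (nvec η x) : ℝ)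
        = (inner ℝ (uMinus (liftPt x (η x))) (nvec η x) : ℝ)) :
    ∀ x,
      -- (i)  `RT = √(1+|∇η|²) (⟦ρ⟧ - ⟦B⟧)`
      RTq η pPlus pMinus x
        = Real.sqrt (1 + ‖gradient η x‖ ^ 2) *
            ((ρMinus - ρPlus) -
              (Bcoef η (fun p => pMinus p + ρMinus * ycoord p) x -
                Bcoef η (fun p => pPlus p + ρPlus * ycoord p) x)) ∧
      -- (ii) `RT = ⟦ρ⟧ (1+|∇η|²)^{-1/2} + ⟦μ⟧ u·n`
      RTq η pPlus pMinus x
        = (ρMinus - ρPlus) * (Real.sqrt (1 + ‖gradient η x‖ ^ 2))⁻¹ +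
            (μMinus - μPlus) *
              ((Real.sqrt (1 + ‖gradient η x‖ ^ 2))⁻¹ *
                (inner ℝ (uMinus (liftPt x (η x))) (nvec η x) : ℝ)) := by
  intro x
  have hS : Real.sqrt (1 + ‖gradient η x‖ ^ 2) ^ 2 = 1 + ‖gradient η x‖ ^ 2 :=
    Real.sq_sqrt (by positivity)
  refine ⟨?_, ?_⟩
  · have hB := Bcoef_sub_of_surfTrace_eq (x := x) (funext fun x => (hcontp x).symm)
    rw [← hS] at hB
    rw [Bcoef_add_mul_ycoord (hη x) (hpM _), Bcoef_add_mul_ycoord (hη x) (hpP _),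
      show ∀ a b : ℝ, ρMinus - ρPlus - (a + ρMinus - (b + ρPlus)) = -(a - b) by intros; ring,
      hB, RTq_eq_conormAt_sub]
    field_simp
    ring
  · rw [RTq_eq_conormAt_sub, conormAt_eq_of_darcy (hDarcyP x), conormAt_eq_of_darcy (hDarcyM x),
      hun x]
    ring

end
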